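/- Let d ≥ 2, λ ≠ 0, and let Θ^{ab}(x) = λ(δ^a_0 x^b − δ^b_0 x^a) be the κ-Minkowski Poisson bivector on ℝ^d. Let U = {x ∈ ℝ^d : x^1 > 0}. A continuously differentiable function μ : U → ℝ satisfies Σ_a ∂_a(μ(x) Θ^{ab}(x)) = 0 on U for every b ∈ {0,…,d−1} if and only if there exists a continuously differentiable function F : ℝ^{d−2} → ℝ such that μ(x) = (x^1)^{1−d} · F(x^2/x^1, x^3/x^1, …, x^{d−1}/x^1) for every x ∈ U. (In particular μ is independent of x^0.) -/

import Mathlib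

set_option autoImplicit false

open scoped BigOperators

/-- Partial derivative `∂_a u (x)` of `u : ℝ^d → ℝ`. -/
noncomputable def pd {d : ℕ} (a : Fin d) (u : (Fin d → ℝ) → ℝ) (x : Fin d → ℝ) : ℝ :=
  fderiv ℝ u x (Pi.single a 1)

/-- The κ-Minkowski Poisson bivector `Θ^{ab}(x) = λ(δ^a_0 x^b − δ^b_0 x^a)`. -/
def Θκ {d : ℕ} (lam : ℝ) (a b : Fin d) (x : Fin d → ℝ) : ℝ :=
  lam * ((if a.1 = 0 then 1 else 0) * x b - (if b.1 = 0 then 1 else 0) * x a)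

-- CLM applied as sum of partials
lemma clm_apply_eq_sum {d : ℕ} (L : (Fin d → ℝ) →L[ℝ] ℝ) (w : Fin d → ℝ) :
    L w = ∑ a, w a * L (Pi.single a 1) := by
  have hw : w = ∑ a, w a • (Pi.single a 1 : Fin d → ℝ) := by
    have h1 := Finset.univ_sum_single w
    rw [← h1]
    congr 1
    funext a
    ext j
    simp [Pi.single_apply]
  conv_lhs => rw [hw]
  rw [map_sum]
  simp [smul_eq_mul]

lemma hasDerivAt_comp_line {d : ℕ} (u : (Fin d → ℝ) → ℝ) (p v : Fin d → ℝ) (t : ℝ)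
    (hu : DifferentiableAt ℝ u (p + t • v)) :
    HasDerivAt (fun s : ℝ => u (p + s • v)) (fderiv ℝ u (p + t • v) v) t := by
  have hc : HasDerivAt (fun s : ℝ => p + s • v) v t := by
    simpa using ((hasDerivAt_id t).smul_const v).const_add p
  exact hu.hasFDerivAt.comp_hasDerivAt t hc

-- product rule for u * Θ
lemma pd_mul_theta {d : ℕ} (lam : ℝ) (a b : Fin d) (u : (Fin d → ℝ) → ℝ) (x : Fin d → ℝ)
    (hu : DifferentiableAt ℝ u x) :
    pd a (fun y => u y * Θκ lam a b y) x
      = pd a u x * Θκ lam a b x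
        + u x * (lam * ((if a.1 = 0 then 1 else 0) * (if b = a then (1:ℝ) else 0)
            - (if b.1 = 0 then 1 else 0))) := by
  set c1 : ℝ := if a.1 = 0 then 1 else 0 with hc1
  set c2 : ℝ := if b.1 = 0 then 1 else 0 with hc2
  set L : (Fin d → ℝ) →L[ℝ] ℝ :=
    (lam * c1) • ContinuousLinearMap.proj b - (lam * c2) • ContinuousLinearMap.proj a with hL
  have hfun : Θκ lam a b = fun y => L y := by
    funext y
    simp only [Θκ, hL, hc1, hc2, ContinuousLinearMap.sub_apply, ContinuousLinearMap.smul_apply,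
      ContinuousLinearMap.proj_apply, smul_eq_mul]
    split_ifs <;> ring
  have hΘ : HasFDerivAt (Θκ lam a b) L x := by
    rw [hfun]; exact L.hasFDerivAt
  have h := hu.hasFDerivAt.mul hΘ
  have hfd : fderiv ℝ (fun y => u y * Θκ lam a b y) x = u x • L + Θκ lam a b x • fderiv ℝ u x := h.fderiv
  simp only [pd, hfd]
  simp only [hL, hc1, hc2, Θκ, ContinuousLinearMap.add_apply, ContinuousLinearMap.smul_apply,
    ContinuousLinearMap.sub_apply, ContinuousLinearMap.proj_apply, smul_eq_mul, Pi.single_apply,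
    Pi.single_eq_same]
  split_ifs <;> ring

lemma div_formula {d : ℕ} (hd : 2 ≤ d) (lam : ℝ) (b : Fin d) (u : (Fin d → ℝ) → ℝ)
    (x : Fin d → ℝ) (hu : DifferentiableAt ℝ u x) :
    ∑ a, pd a (fun y => u y * Θκ lam a b y) x
      = lam * (x b * pd ⟨0, by omega⟩ u x
          + (if b = (⟨0, by omega⟩ : Fin d) then (1:ℝ) else 0)
              * ((1 - (d:ℝ)) * u x - ∑ a, x a * pd a u x)) := by
  set i0 : Fin d := ⟨0, by omega⟩ with hi0
  have key : ∀ a : Fin d, (a.1 = 0) ↔ (a = i0) := fun a => by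
    simp [Fin.ext_iff, hi0]
  have expand : ∀ a : Fin d,
      pd a (fun y => u y * Θκ lam a b y) x
        = (if a = i0 then lam * (x b * pd i0 u x
              + u x * (if b = i0 then (1:ℝ) else 0)) else 0)
          - lam * (if b = i0 then (1:ℝ) else 0) * (x a * pd a u x)
          - lam * (if b = i0 then (1:ℝ) else 0) * u x := by
    intro a
    rw [pd_mul_theta lam a b u x hu]
    simp only [Θκ, key]
    by_cases ha : a = i0 <;> by_cases hb : b = i0 <;>
      simp [ha, hb] <;>
      first
        | ring
        | (rw [if_neg (by rw [ha] at hb ⊢; exact fun h => hb h.symm)]; ring)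
        | (rw [if_neg (fun h => ha (by rw [hb] at h ⊢; exact h.symm))]; ring)
  rw [Finset.sum_congr rfl (fun a _ => expand a), Finset.sum_sub_distrib,
    Finset.sum_sub_distrib, Finset.sum_ite_eq' Finset.univ i0, ← Finset.mul_sum,
    Finset.sum_const, Finset.card_univ, Fintype.card_fin]
  simp only [Finset.mem_univ, if_true, nsmul_eq_mul]
  ring

lemma one_lt_of_two_le_aux {d : ℕ} (hd : 2 ≤ d) : 1 < d := by omega

lemma const_dir0 {d : ℕ} (hd : 2 ≤ d) (μ : (Fin d → ℝ) → ℝ)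
    (hdiff : ∀ x : Fin d → ℝ, 0 < x ⟨1, one_lt_of_two_le_aux hd⟩ → DifferentiableAt ℝ μ x)
    (h0 : ∀ x : Fin d → ℝ, 0 < x ⟨1, one_lt_of_two_le_aux hd⟩ → pd ⟨0, by omega⟩ μ x = 0)
    (p : Fin d → ℝ) (hp : 0 < p ⟨1, one_lt_of_two_le_aux hd⟩) (s t : ℝ) :
    μ (p + s • (Pi.single (⟨0, by omega⟩ : Fin d) 1 : Fin d → ℝ))
      = μ (p + t • (Pi.single (⟨0, by omega⟩ : Fin d) 1 : Fin d → ℝ)) := by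
  set i0 : Fin d := ⟨0, by omega⟩ with hi0
  set i1 : Fin d := ⟨1, one_lt_of_two_le_aux hd⟩ with hi1
  set e0 : Fin d → ℝ := Pi.single i0 1 with he0
  have hne : i1 ≠ i0 := by simp [Fin.ext_iff, hi0, hi1]
  have hmem : ∀ r : ℝ, 0 < (p + r • e0) i1 := by
    intro r
    have h1 : e0 i1 = 0 := Pi.single_eq_of_ne hne 1
    have : (p + r • e0) i1 = p i1 + r * e0 i1 := rfl
    rw [this, h1]
    simpa using hp
  have hderiv : ∀ r : ℝ, HasDerivAt (fun s : ℝ => μ (p + s • e0)) 0 r := by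
    intro r
    have h := hasDerivAt_comp_line μ p e0 r (hdiff _ (hmem r))
    have hz : fderiv ℝ μ (p + r • e0) e0 = 0 := h0 _ (hmem r)
    rwa [hz] at h
  exact is_const_of_deriv_eq_zero (fun r => (hderiv r).differentiableAt)
    (fun r => (hderiv r).deriv) s t

lemma homog {d : ℕ} (hd : 2 ≤ d) (μ : (Fin d → ℝ) → ℝ)
    (hdiff : ∀ x : Fin d → ℝ, 0 < x ⟨1, one_lt_of_two_le_aux hd⟩ → DifferentiableAt ℝ μ x)
    (hE : ∀ x : Fin d → ℝ, 0 < x ⟨1, one_lt_of_two_le_aux hd⟩ →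
        ∑ a, x a * pd a μ x = (1 - (d:ℝ)) * μ x)
    (x : Fin d → ℝ) (hx : 0 < x ⟨1, one_lt_of_two_le_aux hd⟩) :
    μ x = (x ⟨1, one_lt_of_two_le_aux hd⟩) ^ ((1:ℤ) - d) * μ ((x ⟨1, one_lt_of_two_le_aux hd⟩)⁻¹ • x) := by
  set i1 : Fin d := ⟨1, one_lt_of_two_le_aux hd⟩ with hi1
  set ψ : ℝ → ℝ := fun t => t ^ (d - 1) * μ (t • x) with hψ
  have hmem : ∀ t : ℝ, 0 < t → 0 < (t • x) i1 := by
    intro t ht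
    have : (t • x) i1 = t * x i1 := rfl
    rw [this]
    exact mul_pos ht hx
  have hder : ∀ t ∈ Set.Ioi (0:ℝ), HasDerivAt ψ 0 t := by
    intro t ht
    have ht' : (0:ℝ) < t := ht
    have ht0 : t ≠ 0 := ne_of_gt ht'
    have hμt := hdiff _ (hmem t ht')
    have h2 : HasDerivAt (fun s : ℝ => μ (s • x)) (fderiv ℝ μ (t • x) x) t := by
      have h := hasDerivAt_comp_line μ 0 x t (by simpa using hμt)
      simpa using h
    have h1 : HasDerivAt (fun s : ℝ => s ^ (d - 1)) (((d:ℝ) - 1) * t ^ (d - 2)) t := by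
      have h := hasDerivAt_pow (d - 1) t
      have e1 : d - 1 - 1 = d - 2 := by omega
      have e2 : ((d - 1 : ℕ) : ℝ) = (d:ℝ) - 1 := by
        rw [Nat.cast_sub (by omega : 1 ≤ d)]; norm_num
      rw [e1, e2] at h
      exact h
    have hmul := h1.mul h2
    have hfa : fderiv ℝ μ (t • x) x = ∑ a, x a * pd a μ (t • x) := clm_apply_eq_sum _ x
    have heuler := hE (t • x) (hmem t ht')
    have hsum : t * fderiv ℝ μ (t • x) x = (1 - (d:ℝ)) * μ (t • x) := by
      rw [hfa, Finset.mul_sum, ← heuler]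
      refine Finset.sum_congr rfl fun a _ => ?_
      have : (t • x) a = t * x a := rfl
      rw [this]; ring
    have hval : ((d:ℝ) - 1) * t ^ (d - 2) * μ (t • x)
        + t ^ (d - 1) * fderiv ℝ μ (t • x) x = 0 := by
      have hpow : t ^ (d - 1) = t ^ (d - 2) * t := by
        rw [← pow_succ]; congr 1; omega
      rw [hpow, mul_assoc (t ^ (d - 2)) t, hsum]
      ring
    rw [← hval]
    exact hmul
  have hdiffOn : DifferentiableOn ℝ ψ (Set.Ioi 0) :=
    fun t ht => ((hder t ht).differentiableAt).differentiableWithinAt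
  have hzero : ∀ t ∈ Set.Ioi (0:ℝ), fderivWithin ℝ ψ (Set.Ioi 0) t = 0 := by
    intro t ht
    rw [fderivWithin_of_isOpen isOpen_Ioi ht]
    have h := (hder t ht).hasFDerivAt
    have hz : ContinuousLinearMap.toSpanSingleton ℝ (0:ℝ) = 0 := by
      ext y; simp
    rw [hz] at h
    exact h.fderiv
  have h1mem : (1:ℝ) ∈ Set.Ioi (0:ℝ) := by norm_num
  have hinvmem : (x i1)⁻¹ ∈ Set.Ioi (0:ℝ) := by
    simp [Set.mem_Ioi, inv_pos, hx]
  have hconst := (convex_Ioi (0:ℝ)).is_const_of_fderivWithin_eq_zero hdiffOn hzero h1mem hinvmem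
  have hψ1 : ψ 1 = μ x := by simp [hψ]
  have hψi : ψ ((x i1)⁻¹) = ((x i1)⁻¹) ^ (d - 1) * μ ((x i1)⁻¹ • x) := rfl
  have hzp : (x i1) ^ ((1:ℤ) - d) = ((x i1)⁻¹) ^ (d - 1) := by
    have e : ((1:ℤ) - d) = -((d - 1 : ℕ) : ℤ) := by
      push_cast [Nat.cast_sub (by omega : 1 ≤ d)]; ring
    rw [e, zpow_neg, zpow_natCast, inv_pow]
  rw [hzp, ← hψi, ← hconst, hψ1]


set_option maxHeartbeats 1000000 in
theorem stmt16 {d : ℕ} (hd : 2 ≤ d) (lam : ℝ) (hlam : lam ≠ 0)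
    (μ : (Fin d → ℝ) → ℝ)
    (hμ : ContDiffOn ℝ 1 μ {x : Fin d → ℝ | 0 < x ⟨1, by omega⟩}) :
    (∀ x ∈ {x : Fin d → ℝ | 0 < x ⟨1, by omega⟩}, ∀ b : Fin d,
        ∑ a, pd a (fun y => μ y * Θκ lam a b y) x = 0)
      ↔ ∃ F : (Fin (d - 2) → ℝ) → ℝ, ContDiff ℝ 1 F ∧
          ∀ x ∈ {x : Fin d → ℝ | 0 < x ⟨1, by omega⟩},
            μ x = (x ⟨1, by omega⟩) ^ ((1 : ℤ) - d) *
              F (fun i => x ⟨i.1 + 2, by omega⟩ / x ⟨1, by omega⟩) := by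
  have hU : IsOpen {x : Fin d → ℝ | 0 < x (⟨1, by omega⟩ : Fin d)} :=
    isOpen_lt continuous_const (continuous_apply _)
  constructor
  · intro hpde
    have hdiff : ∀ x : Fin d → ℝ, 0 < x ⟨1, by omega⟩ → DifferentiableAt ℝ μ x := by
      intro x hx
      exact (hμ.differentiableOn one_ne_zero).differentiableAt (hU.mem_nhds hx)
    have h0 : ∀ x : Fin d → ℝ, 0 < x ⟨1, by omega⟩ → pd ⟨0, by omega⟩ μ x = 0 := by
      intro x hx
      have h := hpde x hx ⟨1, by omega⟩
      rw [div_formula hd lam _ μ x (hdiff x hx)] at h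
      have hb : (⟨1, by omega⟩ : Fin d) ≠ (⟨0, by omega⟩ : Fin d) := by simp [Fin.ext_iff]
      rw [if_neg hb] at h
      rcases (show lam = 0 ∨ x (⟨1, by omega⟩ : Fin d) = 0 ∨ pd (⟨0, by omega⟩ : Fin d) μ x = 0
          by simpa using h) with h' | h' | h'
      · exact absurd h' hlam
      · exact absurd h' (ne_of_gt hx)
      · exact h'
    have hE : ∀ x : Fin d → ℝ, 0 < x ⟨1, by omega⟩ →
        ∑ a, x a * pd a μ x = (1 - (d:ℝ)) * μ x := by
      intro x hx
      have h := hpde x hx ⟨0, by omega⟩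
      rw [div_formula hd lam _ μ x (hdiff x hx), if_pos rfl, h0 x hx] at h
      rcases (show lam = 0 ∨ (1 - (d:ℝ)) * μ x - ∑ a, x a * pd a μ x = 0
          by simpa using h) with h' | h'
      · exact absurd h' hlam
      · linarith
    classical
    set ext2 : (Fin (d - 2) → ℝ) → (Fin d → ℝ) := fun y j =>
      if hj : j.1 < 2 then (if j.1 = 0 then 0 else 1)
      else y ⟨j.1 - 2, by have := j.2; omega⟩ with hext
    have hextmem : ∀ y : Fin (d-2) → ℝ, 0 < ext2 y ⟨1, by omega⟩ := by
      intro y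
      simp [hext]
    have hext2 : ContDiff ℝ 1 ext2 := by
      apply contDiff_pi.2
      intro j
      by_cases hj : j.1 < 2
      · simp only [hext, dif_pos hj]
        exact contDiff_const
      · simp only [hext, dif_neg hj]
        exact (ContinuousLinearMap.proj (R := ℝ) (φ := fun _ : Fin (d-2) => ℝ)
          ⟨j.1 - 2, by have := j.2; omega⟩).contDiff
    have hcomp : ContDiffOn ℝ 1 (fun y => μ (ext2 y)) Set.univ :=
      ContDiffOn.comp hμ hext2.contDiffOn (fun y _ => hextmem y)
    refine ⟨fun y => μ (ext2 y), contDiffOn_univ.mp hcomp, ?_⟩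
    intro x hx
    have hx' : 0 < x ⟨1, by omega⟩ := hx
    have step1 := homog hd μ hdiff hE x hx'
    set c : ℝ := (x ⟨1, by omega⟩)⁻¹ with hc
    have hcpos : 0 < c := inv_pos.2 hx'
    have hcx : 0 < (c • x) ⟨1, by omega⟩ := by
      have : (c • x) (⟨1, by omega⟩ : Fin d) = c * x ⟨1, by omega⟩ := rfl
      rw [this]
      exact mul_pos hcpos hx'
    have step2 : μ (c • x) = μ (ext2 (fun i => x ⟨i.1 + 2, by have := i.2; omega⟩ / x ⟨1, by omega⟩)) := by
      have h := const_dir0 hd μ hdiff h0 (c • x) hcx 0 (-(c * x ⟨0, by omega⟩))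
      have e1 : c • x + (0:ℝ) • (Pi.single (⟨0, by omega⟩ : Fin d) 1 : Fin d → ℝ) = c • x := by
        simp
      have e2 : c • x + (-(c * x ⟨0, by omega⟩)) • (Pi.single (⟨0, by omega⟩ : Fin d) 1 : Fin d → ℝ)
          = ext2 (fun i => x ⟨i.1 + 2, by have := i.2; omega⟩ / x ⟨1, by omega⟩) := by
        funext j
        by_cases hj0 : j = (⟨0, by omega⟩ : Fin d)
        · subst hj0
          have : ext2 (fun i => x ⟨i.1 + 2, by have := i.2; omega⟩ / x ⟨1, by omega⟩)
              (⟨0, by omega⟩ : Fin d) = 0 := by simp [hext]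
          rw [this]
          simp [Pi.single_eq_same]
        · have hs : (Pi.single (⟨0, by omega⟩ : Fin d) 1 : Fin d → ℝ) j = 0 :=
            Pi.single_eq_of_ne hj0 1
          have hlhs : (c • x + (-(c * x ⟨0, by omega⟩)) • (Pi.single (⟨0, by omega⟩ : Fin d) 1 : Fin d → ℝ)) j
              = c * x j := by
            simp [hs]
          rw [hlhs]
          by_cases hj1 : j.1 < 2
          · have hjne : j.1 ≠ 0 := fun hh => hj0 (Fin.ext hh)
            have hj1' : j = (⟨1, by omega⟩ : Fin d) := Fin.ext (show j.1 = 1 by omega)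
            rw [hj1']
            have hre : ext2 (fun i => x ⟨i.1 + 2, by have := i.2; omega⟩ / x ⟨1, by omega⟩)
                (⟨1, by omega⟩ : Fin d) = 1 := by simp [hext]
            rw [hre, hc, inv_mul_cancel₀ (ne_of_gt hx')]
          · have h2le : 2 ≤ j.1 := by omega
            have hre : ext2 (fun i => x ⟨i.1 + 2, by have := i.2; omega⟩ / x ⟨1, by omega⟩) j
                = x ⟨j.1 - 2 + 2, by have := j.2; omega⟩ / x ⟨1, by omega⟩ := by
              simp only [hext]
              rw [dif_neg hj1]
            rw [hre]
            have e : (⟨j.1 - 2 + 2, by have := j.2; omega⟩ : Fin d) = j :=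
              Fin.ext (show j.1 - 2 + 2 = j.1 by omega)
            rw [e, hc, div_eq_inv_mul]
      rw [e1, e2] at h
      exact h
    rw [step1, step2]
  · rintro ⟨F, hF, hform⟩
    set g : (Fin d → ℝ) → ℝ := fun y =>
      (y ⟨1, by omega⟩) ^ ((1:ℤ) - d)
        * F (fun i => y ⟨i.1 + 2, by have := i.2; omega⟩ / y ⟨1, by omega⟩) with hg
    have hμg : ∀ y : Fin d → ℝ, 0 < y ⟨1, by omega⟩ → μ y = g y := fun y hy => hform y hy
    have hgdiff : ∀ y : Fin d → ℝ, 0 < y ⟨1, by omega⟩ → DifferentiableAt ℝ g y := by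
      intro y hy
      have hy0 : y (⟨1, by omega⟩ : Fin d) ≠ 0 := ne_of_gt hy
      have hproj : ∀ j : Fin d, DifferentiableAt ℝ (fun z : Fin d → ℝ => z j) y :=
        fun j => (ContinuousLinearMap.proj (R := ℝ) (φ := fun _ : Fin d => ℝ) j).differentiableAt
      have h1 : DifferentiableAt ℝ (fun z : Fin d → ℝ => (z ⟨1, by omega⟩) ^ ((1:ℤ) - d)) y :=
        (hproj _).zpow (Or.inl hy0)
      have hv : DifferentiableAt ℝ
          (fun z : Fin d → ℝ => fun i : Fin (d-2) =>
            z ⟨i.1 + 2, by have := i.2; omega⟩ / z ⟨1, by omega⟩) y := by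
        apply differentiableAt_pi.2
        intro i
        simp only [div_eq_mul_inv]
        exact (hproj ⟨i.1 + 2, by have := i.2; omega⟩).mul ((hproj ⟨1, by omega⟩).inv hy0)
      have h2 := ((hF.differentiable one_ne_zero).differentiableAt).comp y hv
      exact h1.mul h2
    intro x hx b
    have hx' : 0 < x (⟨1, by omega⟩ : Fin d) := hx
    have hev : μ =ᶠ[nhds x] g :=
      Filter.eventually_of_mem (hU.mem_nhds hx) (fun y hy => hμg y hy)
    have hpd : ∀ a : Fin d, pd a (fun y => μ y * Θκ lam a b y) x
        = pd a (fun y => g y * Θκ lam a b y) x := by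
      intro a
      unfold pd
      congr 1
      exact Filter.EventuallyEq.fderiv_eq (hev.mul Filter.EventuallyEq.rfl)
    rw [Finset.sum_congr rfl (fun a _ => hpd a),
      div_formula hd lam b g x (hgdiff x hx')]
    -- pd_0 g x = 0
    set e0 : Fin d → ℝ := Pi.single (⟨0, by omega⟩ : Fin d) 1 with he0
    have hA : pd (⟨0, by omega⟩ : Fin d) g x = 0 := by
      have hcoord : ∀ (t : ℝ) (j : Fin d), j ≠ (⟨0, by omega⟩ : Fin d) →
          (x + t • e0) j = x j := by
        intro t j hj
        have : e0 j = 0 := Pi.single_eq_of_ne hj 1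
        simp [this]
      have hconstline : (fun t : ℝ => g (x + t • e0)) = fun _ => g x := by
        funext t
        simp only [hg]
        have e1 : (x + t • e0) (⟨1, by omega⟩ : Fin d) = x ⟨1, by omega⟩ :=
          hcoord t _ (by simp [Fin.ext_iff])
        have e2 : (fun i : Fin (d-2) =>
            (x + t • e0) ⟨i.1 + 2, by have := i.2; omega⟩ / (x + t • e0) ⟨1, by omega⟩)
            = fun i : Fin (d-2) => x ⟨i.1 + 2, by have := i.2; omega⟩ / x ⟨1, by omega⟩ := by
          funext i
          rw [hcoord t _ (by simp [Fin.ext_iff]), e1]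
        rw [e2, e1]
      have hpt : x + (0:ℝ) • e0 = x := by simp
      have h1 : HasDerivAt (fun t : ℝ => g (x + t • e0)) (fderiv ℝ g (x + (0:ℝ) • e0) e0) 0 :=
        hasDerivAt_comp_line g x e0 0 (by rw [hpt]; exact hgdiff x hx')
      rw [hpt] at h1
      have h2 : HasDerivAt (fun t : ℝ => g (x + t • e0)) 0 0 := by
        rw [hconstline]; exact hasDerivAt_const 0 (g x)
      exact h1.unique h2
    -- Euler relation for g
    have hB : ∑ a, x a * pd a g x = (1 - (d:ℝ)) * g x := by
      have hhom : ∀ t : ℝ, 0 < t → g (t • x) = t ^ ((1:ℤ) - d) * g x := by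
        intro t ht
        simp only [hg]
        have e1 : (t • x) (⟨1, by omega⟩ : Fin d) = t * x ⟨1, by omega⟩ := rfl
        have e2 : (fun i : Fin (d-2) =>
            (t • x) ⟨i.1 + 2, by have := i.2; omega⟩ / (t • x) ⟨1, by omega⟩)
            = fun i : Fin (d-2) => x ⟨i.1 + 2, by have := i.2; omega⟩ / x ⟨1, by omega⟩ := by
          funext i
          show (t * x _) / (t * x _) = _
          rw [mul_div_mul_left _ _ (ne_of_gt ht)]
        rw [e2, e1, mul_zpow]
        ring
      have h2' := hasDerivAt_comp_line g 0 x 1 (by simpa using hgdiff x hx')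
      have hpt : (0:Fin d → ℝ) + (1:ℝ) • x = x := by simp
      rw [hpt] at h2'
      have h2 : HasDerivAt (fun t : ℝ => g (t • x)) (fderiv ℝ g x x) 1 := by
        have hfn : (fun s : ℝ => g ((0:Fin d → ℝ) + s • x)) = fun t : ℝ => g (t • x) := by
          funext s; simp
        rwa [hfn] at h2'
      have h3 : HasDerivAt (fun t : ℝ => t ^ ((1:ℤ) - d) * g x) ((1 - (d:ℝ)) * g x) 1 := by
        have h := (hasDerivAt_zpow ((1:ℤ) - d) 1 (Or.inl one_ne_zero)).mul_const (g x)
        have e : (((1:ℤ) - d : ℤ) : ℝ) * (1:ℝ) ^ ((1:ℤ) - d - 1) = (1 - (d:ℝ)) := by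
          rw [one_zpow]
          push_cast
          ring
        rwa [e] at h
      have h4 : HasDerivAt (fun t : ℝ => g (t • x)) ((1 - (d:ℝ)) * g x) 1 := by
        refine h3.congr_of_eventuallyEq ?_
        refine Filter.eventually_of_mem (isOpen_Ioi.mem_nhds (by norm_num : (1:ℝ) ∈ Set.Ioi 0)) ?_
        intro t ht
        exact hhom t ht
      have hEg : fderiv ℝ g x x = (1 - (d:ℝ)) * g x := h2.unique h4
      rw [← hEg]
      exact (clm_apply_eq_sum (fderiv ℝ g x) x).symm
    rw [hA, hB]
    simp
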